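/- arXiv:1908.03544 — 2 statements merged into one kernel-verified Lean document; each statement's English description precedes it below -/
import Mathlib

section
/- Let U be a Hermitian invertible K×K complex matrix and ξ > 0 such that 1 + ((ξ−1)/ξ)K ≠ 0. Then the matrix ξ (U* ⊗ U) + (ξ−1) vec(U) vec(U)ᴴ is invertible with inverse (1/ξ)(U⁻* ⊗ U⁻¹) − η vec(U⁻¹) vec(U⁻¹)ᴴ, where η = (ξ−1)/(ξ² (1 + ((ξ−1)/ξ) K)). -/
open Matrix Kronecker

/-- Column-stacking vectorization: `vec M (j, i) = M i j`. -/
def Matrix.colVec {R : Type*} {m n : Type*} (M : Matrix m n R) : n × m → R :=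
  fun p => M p.2 p.1

private lemma kronAux_mul_vecMulVec {m : Type*} [Fintype m] (M : Matrix m m ℂ) (a b : m → ℂ) :
    M * Matrix.vecMulVec a b = Matrix.vecMulVec (M *ᵥ a) b := by
  ext i j
  simp [Matrix.mul_apply, Matrix.vecMulVec_apply, Matrix.mulVec, dotProduct,
    Finset.sum_mul, mul_assoc]

private lemma kronAux_vecMulVec_mul {m : Type*} [Fintype m] (M : Matrix m m ℂ) (a b : m → ℂ) :
    Matrix.vecMulVec a b * M = Matrix.vecMulVec a (b ᵥ* M) := by
  ext i j
  simp [Matrix.mul_apply, Matrix.vecMulVec_apply, Matrix.vecMul, dotProduct,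
    Finset.mul_sum, mul_assoc]

private lemma kronAux_vecMulVec_mul_vecMulVec {m : Type*} [Fintype m] (a b c d : m → ℂ) :
    Matrix.vecMulVec a b * Matrix.vecMulVec c d = (b ⬝ᵥ c) • Matrix.vecMulVec a d := by
  ext i j
  simp [Matrix.mul_apply, Matrix.vecMulVec_apply, dotProduct, Finset.sum_mul,
    Finset.mul_sum]
  ring_nf
  exact Finset.sum_congr rfl fun k _ => by ring

private lemma kronAux_kron_mulVec_vec {K : ℕ} (X Y M : Matrix (Fin K) (Fin K) ℂ) :
    (Xᵀ ⊗ₖ Y) *ᵥ Matrix.colVec M = Matrix.colVec (Y * M * X) := by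
  ext ⟨j, i⟩
  simp only [Matrix.mulVec, dotProduct, Matrix.colVec, Matrix.mul_apply,
    Matrix.kroneckerMap_apply, Matrix.transpose_apply, Fintype.sum_prod_type,
    Finset.sum_mul, Finset.mul_sum]
  exact Finset.sum_congr rfl fun l _ => Finset.sum_congr rfl fun k _ => by ring

private lemma kronAux_star_vec_dot {K : ℕ} (M N : Matrix (Fin K) (Fin K) ℂ) :
    star (Matrix.colVec M) ⬝ᵥ Matrix.colVec N = (Mᴴ * N).trace := by
  simp only [dotProduct, Matrix.colVec, Matrix.trace, Matrix.diag, Matrix.mul_apply,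
    Matrix.conjTranspose_apply, Fintype.sum_prod_type, Pi.star_apply]

private lemma kronAux_kron_hermitian {K : ℕ} {A B : Matrix (Fin K) (Fin K) ℂ}
    (hA : A.IsHermitian) (hB : B.IsHermitian) : (A ⊗ₖ B).IsHermitian := by
  ext ⟨i, j⟩ ⟨k, l⟩
  simp only [Matrix.conjTranspose_apply, Matrix.kroneckerMap_apply, star_mul',
    hA.apply, hB.apply]

/-- For `U` Hermitian invertible and suitable real `ξ`, the matrix
`ξ (U* ⊗ U) + (ξ−1) vec(U) vec(U)ᴴ` is invertible with inverse
`(1/ξ)(U⁻* ⊗ U⁻¹) − η vec(U⁻¹) vec(U⁻¹)ᴴ`, where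
`η = (ξ−1)/(ξ²(1 + ((ξ−1)/ξ) K))`. -/
theorem kron_plus_rank_one_inverse {K : ℕ}
    (U : Matrix (Fin K) (Fin K) ℂ) (hU : U.IsHermitian) (hUunit : IsUnit U)
    (ξ : ℝ) (hξ : 0 < ξ) (hden : 1 + ((ξ - 1) / ξ) * K ≠ 0)
    (η : ℝ) (hη : η = (ξ - 1) / (ξ ^ 2 * (1 + ((ξ - 1) / ξ) * K)))
    (Amat Bmat : Matrix (Fin K × Fin K) (Fin K × Fin K) ℂ)
    (hA : Amat = (ξ : ℂ) • (U.map star ⊗ₖ U)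
      + ((ξ : ℂ) - 1) • Matrix.vecMulVec (Matrix.colVec U) (star (Matrix.colVec U)))
    (hB : Bmat = ((ξ : ℂ))⁻¹ • ((U.map star)⁻¹ ⊗ₖ U⁻¹)
      - (η : ℂ) • Matrix.vecMulVec (Matrix.colVec U⁻¹) (star (Matrix.colVec U⁻¹))) :
    Amat * Bmat = 1 ∧ Bmat * Amat = 1 ∧ IsUnit Amat := by
  have hξ0 : (ξ : ℝ) ≠ 0 := ne_of_gt hξ
  have hξc : (ξ : ℂ) ≠ 0 := by exact_mod_cast hξ0
  -- U.map star = Uᵀ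
  have hmap : U.map star = Uᵀ := by
    ext i j
    simp only [Matrix.map_apply, Matrix.transpose_apply]
    rw [← hU.apply j i]
  have hdet : IsUnit U.det := (Matrix.isUnit_iff_isUnit_det U).mp hUunit
  have hdetT : IsUnit Uᵀ.det := by rwa [Matrix.det_transpose]
  have hUUi : U * U⁻¹ = 1 := Matrix.mul_nonsing_inv U hdet
  have hUiU : U⁻¹ * U = 1 := Matrix.nonsing_inv_mul U hdet
  have hTi : (Uᵀ)⁻¹ = (U⁻¹)ᵀ := (Matrix.transpose_nonsing_inv U).symm
  -- notation
  set v := Matrix.colVec U with hv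
  set w := Matrix.colVec U⁻¹ with hw
  set T : Matrix (Fin K × Fin K) (Fin K × Fin K) ℂ := Uᵀ ⊗ₖ U with hT
  set T' : Matrix (Fin K × Fin K) (Fin K × Fin K) ℂ := (Uᵀ)⁻¹ ⊗ₖ U⁻¹ with hT'
  set P := Matrix.vecMulVec v (star v) with hP
  set Q := Matrix.vecMulVec w (star w) with hQ
  set R := Matrix.vecMulVec v (star w) with hR
  set R' := Matrix.vecMulVec w (star v) with hR'
  rw [hmap] at hA hB
  -- key matrix identities
  have h1 : T * T' = 1 := by
    rw [hT, hT', ← Matrix.mul_kronecker_mul, Matrix.mul_nonsing_inv _ hdetT,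
      Matrix.mul_nonsing_inv _ hdet, Matrix.one_kronecker_one]
  have h1' : T' * T = 1 := by
    rw [hT, hT', ← Matrix.mul_kronecker_mul, Matrix.nonsing_inv_mul _ hdetT,
      Matrix.nonsing_inv_mul _ hdet, Matrix.one_kronecker_one]
  have h2 : T *ᵥ w = v := by
    rw [hT, hw, kronAux_kron_mulVec_vec, hUUi, Matrix.one_mul, hv]
  have h3 : T' *ᵥ v = w := by
    rw [hT', hTi, hv, kronAux_kron_mulVec_vec, hUiU, Matrix.one_mul, hw]
  -- Hermitian structure
  have hUinv : (U⁻¹).IsHermitian := hU.inv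
  have hTH : T.IsHermitian := kronAux_kron_hermitian hU.transpose hU
  have hT'H : T'.IsHermitian := by
    rw [hT', hTi]
    exact kronAux_kron_hermitian hUinv.transpose hUinv
  -- trace identities
  have h4 : star v ⬝ᵥ w = (K : ℂ) := by
    rw [hv, hw, kronAux_star_vec_dot, hU.eq, hUUi]
    simp
  have h5 : star w ⬝ᵥ v = (K : ℂ) := by
    rw [hv, hw, kronAux_star_vec_dot, hUinv.eq, hUiU]
    simp
  -- vecMul identities
  have h6 : star v ᵥ* T' = star w := by
    rw [← hT'H.eq, ← Matrix.star_mulVec, h3]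
  have h7 : star w ᵥ* T = star v := by
    rw [← hTH.eq, ← Matrix.star_mulVec, h2]
  -- the four products
  have hTQ : T * Q = R := by rw [hQ, kronAux_mul_vecMulVec, h2, hR]
  have hPT' : P * T' = R := by rw [hP, kronAux_vecMulVec_mul, h6, hR]
  have hPQ : P * Q = (K : ℂ) • R := by
    rw [hP, hQ, kronAux_vecMulVec_mul_vecMulVec, h4, hR]
  have hT'P : T' * P = R' := by rw [hP, kronAux_mul_vecMulVec, h3, hR']
  have hQT : Q * T = R' := by rw [hQ, kronAux_vecMulVec_mul, h7, hR']
  have hQP : Q * P = (K : ℂ) • R' := by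
    rw [hP, hQ, kronAux_vecMulVec_mul_vecMulVec, h5, hR']
  -- scalar coefficient vanishes
  have hne : ξ + (ξ - 1) * (K : ℝ) ≠ 0 := by
    intro h
    apply hden
    have heq : 1 + (ξ - 1) / ξ * (K : ℝ) = (ξ + (ξ - 1) * K) / ξ := by
      field_simp
    rw [heq, h, zero_div]
  have hηe : η = (ξ - 1) / (ξ * (ξ + (ξ - 1) * K)) := by
    rw [hη]
    congr 1
    field_simp
  have hcR : (ξ - 1) * ξ⁻¹ - ξ * η - (ξ - 1) * η * (K : ℝ) = 0 := by
    rw [hηe]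
    field_simp
    ring
  have hc : ((ξ : ℂ) - 1) * (ξ : ℂ)⁻¹ - (ξ : ℂ) * (η : ℂ)
      - ((ξ : ℂ) - 1) * (η : ℂ) * (K : ℂ) = 0 := by
    have h := congrArg (fun x : ℝ => (x : ℂ)) hcR
    push_cast at h
    linear_combination h
  have hone : (ξ : ℂ) * (ξ : ℂ)⁻¹ = 1 := mul_inv_cancel₀ hξc
  -- expand A * B
  have hAB : Amat * Bmat = 1 := by
    rw [hA, hB, add_mul, mul_sub, mul_sub]
    simp only [smul_mul_assoc, mul_smul_comm, smul_smul]
    rw [h1, hTQ, hPT', hPQ]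
    match_scalars
    · field_simp
    · linear_combination hc
  have hBA : Bmat * Amat = 1 := by
    rw [hA, hB, sub_mul, mul_add, mul_add]
    simp only [smul_mul_assoc, mul_smul_comm, smul_smul]
    rw [h1', hT'P, hQT, hQP]
    match_scalars
    · field_simp
    · linear_combination hc
  have hdetAB : Amat.det * Bmat.det = 1 := by
    rw [← Matrix.det_mul, hAB, Matrix.det_one]
  exact ⟨hAB, hBA, (Matrix.isUnit_iff_isUnit_det Amat).mpr
    (IsUnit.of_mul_eq_one _ hdetAB)⟩
end

section
/- Let A be a full column rank M×K complex matrix (K < M), R a Hermitian positive definite K×K matrix, σ² > 0, and Σ = A R Aᴴ + σ² I. Let U = Aᴴ Σ⁻¹ A. Then A U⁻¹ Aᴴ Σ⁻¹ = A (Aᴴ A)⁻¹ Aᴴ, and consequently Σ⁻¹ − Σ⁻¹ A U⁻¹ Aᴴ Σ⁻¹ = (1/σ²) Π⊥_A, where Π⊥_A = I − A(AᴴA)⁻¹Aᴴ. -/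
/-!
Writing `G = Aᴴ A` and `T = G R + σ² I`, one has `Aᴴ Σ = T Aᴴ`, hence `T Aᴴ Σ⁻¹ = Aᴴ` and
`U⁻¹ = G⁻¹ T`; substituting collapses `A U⁻¹ Aᴴ Σ⁻¹` to `A G⁻¹ Aᴴ`. Since `Aᴴ Π⊥_A = 0`, the
columns of `Π⊥_A` are eigenvectors of `Σ` for `σ²`, so `Σ⁻¹ Π⊥_A = σ⁻² Π⊥_A`, which is the
second identity.
-/

open Matrix ComplexOrder

namespace Matrix

variable {l m n 𝕜 : Type*} [Fintype m] [Fintype n] [DecidableEq m] [DecidableEq n]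

theorem isUnit_of_rank_eq_card [Field 𝕜] {B : Matrix n n 𝕜} (h : B.rank = Fintype.card n) :
    IsUnit B := by
  rw [← mulVec_surjective_iff_isUnit, ← coe_mulVecLin, ← LinearMap.range_eq_top]
  exact Submodule.eq_top_of_finrank_eq (by rw [← rank, h, Module.finrank_fintype_fun_eq_card])

theorem inv_mul_eq_inv_smul_of_mul_eq_smul [Field 𝕜] {S : Matrix m m 𝕜} {X : Matrix m l 𝕜}
    {c : 𝕜} (hS : IsUnit S.det) (hc : c ≠ 0) (h : S * X = c • X) : S⁻¹ * X = c⁻¹ • X := by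
  rw [← inv_smul_smul₀ hc (S⁻¹ * X), ← Matrix.mul_smul, ← h, ← Matrix.mul_assoc,
    nonsing_inv_mul _ hS, Matrix.one_mul]

section CommRing

variable [CommRing 𝕜] {A : Matrix m n 𝕜} {B : Matrix n m 𝕜}

theorem mul_one_sub_mul_inv_mul_eq_zero (hBA : IsUnit (B * A).det) :
    B * (1 - A * (B * A)⁻¹ * B) = 0 := by
  rw [Matrix.mul_sub, Matrix.mul_one, ← Matrix.mul_assoc, ← Matrix.mul_assoc,
    mul_nonsing_inv _ hBA, Matrix.one_mul, sub_self]

theorem mul_inv_mul_mul_inv_eq_of_mul_eq_mul {S : Matrix m m 𝕜} {T : Matrix n n 𝕜}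
    (hS : IsUnit S.det) (hBA : IsUnit (B * A).det) (hT : T * B = B * S) :
    A * (B * S⁻¹ * A)⁻¹ * B * S⁻¹ = A * (B * A)⁻¹ * B := by
  have hTBS : T * (B * S⁻¹) = B := by
    rw [← Matrix.mul_assoc, hT, Matrix.mul_assoc, mul_nonsing_inv _ hS, Matrix.mul_one]
  have hinv : (B * S⁻¹ * A)⁻¹ = (B * A)⁻¹ * T := by
    refine inv_eq_left_inv ?_
    rw [Matrix.mul_assoc, ← Matrix.mul_assoc T, hTBS, nonsing_inv_mul _ hBA]
  rw [hinv]
  simp only [Matrix.mul_assoc, hTBS]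

end CommRing

end Matrix

theorem noise_subspace_projection_identity_general {M K : ℕ}
    (A : Matrix (Fin M) (Fin K) ℂ) (hA : A.rank = K)
    (R : Matrix (Fin K) (Fin K) ℂ) (hR : R.PosDef)
    (σ2 : ℝ) (hσ : 0 < σ2)
    (S : Matrix (Fin M) (Fin M) ℂ) (hS : S = A * R * Aᴴ + (σ2 : ℂ) • 1)
    (U : Matrix (Fin K) (Fin K) ℂ) (hU : U = Aᴴ * S⁻¹ * A) :
    A * U⁻¹ * Aᴴ * S⁻¹ = A * (Aᴴ * A)⁻¹ * Aᴴ
    ∧ S⁻¹ - S⁻¹ * A * U⁻¹ * Aᴴ * S⁻¹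
        = ((σ2 : ℂ))⁻¹ • (1 - A * (Aᴴ * A)⁻¹ * Aᴴ) := by
  subst hU
  have hσ' : (0 : ℂ) < σ2 := by exact_mod_cast hσ
  have hG : IsUnit (Aᴴ * A).det := (isUnit_iff_isUnit_det _).mp <|
    isUnit_of_rank_eq_card (by rw [rank_conjTranspose_mul_self, hA, Fintype.card_fin])
  have hSdet : IsUnit S.det := (isUnit_iff_isUnit_det _).mp <| by
    rw [hS]
    exact (PosDef.posSemidef_add (hR.posSemidef.mul_mul_conjTranspose_same A)
      (PosDef.one.smul hσ')).isUnit
  have hT : (Aᴴ * A * R + (σ2 : ℂ) • 1) * Aᴴ = Aᴴ * S := by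
    rw [hS]
    simp only [Matrix.add_mul, Matrix.mul_add, Matrix.mul_assoc, smul_mul, Matrix.mul_smul,
      Matrix.one_mul, Matrix.mul_one]
  have hproj := mul_inv_mul_mul_inv_eq_of_mul_eq_mul hSdet hG hT
  have hSP : S * (1 - A * (Aᴴ * A)⁻¹ * Aᴴ) = (σ2 : ℂ) • (1 - A * (Aᴴ * A)⁻¹ * Aᴴ) := by
    rw [hS, Matrix.add_mul, Matrix.mul_assoc (A * R), mul_one_sub_mul_inv_mul_eq_zero hG,
      Matrix.mul_zero, zero_add, smul_mul, Matrix.one_mul]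
  refine ⟨hproj, ?_⟩
  calc S⁻¹ - S⁻¹ * A * (Aᴴ * S⁻¹ * A)⁻¹ * Aᴴ * S⁻¹
      = S⁻¹ * (1 - A * (Aᴴ * A)⁻¹ * Aᴴ) := by
        rw [Matrix.mul_sub, Matrix.mul_one, ← hproj]
        simp only [Matrix.mul_assoc]
    _ = _ := inv_mul_eq_inv_smul_of_mul_eq_smul hSdet hσ'.ne' hSP

/-- With `Σ = A R Aᴴ + σ² I` and `U = Aᴴ Σ⁻¹ A` (A full column rank, `R` Hermitian positive
definite, `σ² > 0`), one has `A U⁻¹ Aᴴ Σ⁻¹ = A (Aᴴ A)⁻¹ Aᴴ` and consequently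
`Σ⁻¹ − Σ⁻¹ A U⁻¹ Aᴴ Σ⁻¹ = (1/σ²) Π⊥_A`. -/
theorem noise_subspace_projection_identity {M K : ℕ} (hK : K < M)
    (A : Matrix (Fin M) (Fin K) ℂ) (hA : A.rank = K)
    (R : Matrix (Fin K) (Fin K) ℂ) (hR : R.PosDef)
    (σ2 : ℝ) (hσ : 0 < σ2)
    (S : Matrix (Fin M) (Fin M) ℂ) (hS : S = A * R * Aᴴ + (σ2 : ℂ) • 1)
    (U : Matrix (Fin K) (Fin K) ℂ) (hU : U = Aᴴ * S⁻¹ * A) :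
    A * U⁻¹ * Aᴴ * S⁻¹ = A * (Aᴴ * A)⁻¹ * Aᴴ
    ∧ S⁻¹ - S⁻¹ * A * U⁻¹ * Aᴴ * S⁻¹
        = ((σ2 : ℂ))⁻¹ • (1 - A * (Aᴴ * A)⁻¹ * Aᴴ) :=
  noise_subspace_projection_identity_general A hA R hR σ2 hσ S hS U hU
end
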